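/- arXiv:math/0511719 — 2 statements merged into one kernel-verified Lean document; each statement's English description precedes it below -/
import Mathlib

section
/- Let U ⊆ ℂ be open and let f : ℂ → M_d(ℂ) be analytic on U with f'(x) invertible for all x ∈ U. Let φ(x) = (αx+β)/(γx+δ) be a Möbius transformation with αδ − βγ ≠ 0, let V ⊆ ℂ be open with γx+δ ≠ 0 and φ(x) ∈ U for all x ∈ V. Then the matrix-valued Schwartz derivative is invariant under this change of variable as a quadratic differential: for all x ∈ V, S(f∘φ)(x) = φ'(x)² · S(f)(φ(x)). -/
/-!
The pre-Schwarzian `L f = (f')⁻¹ f''` transforms affinely under a change of variable: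
`L (f ∘ φ) = (φ''/φ') • 1 + φ' • (L f ∘ φ)`. The scalar part commutes with everything, so in
`(L (f ∘ φ))' - (1/2) (L (f ∘ φ))²` the cross terms `φ'' • L f` cancel, leaving the cocycle identity
`S(f ∘ φ) = S(φ) • 1 + φ'² • (S(f) ∘ φ)` with the classical scalar Schwarzian `S(φ)`. A Möbius map
has `φ''/φ' = -2γ/(γx+δ)`, whose derivative is exactly half its square, so `S(φ) = 0`.
-/

open Matrix

attribute [local instance] Matrix.normedAddCommGroup Matrix.normedSpace

/-- The matrix-valued Schwartz derivative coefficient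
`S(f) = ((f')⁻¹f'')' - (1/2)((f')⁻¹f'')²`. -/
noncomputable def matS {d : ℕ} (f : ℂ → Matrix (Fin d) (Fin d) ℂ) :
    ℂ → Matrix (Fin d) (Fin d) ℂ :=
  fun x => deriv (fun t => (deriv f t)⁻¹ * deriv (deriv f) t) x
    - (1 / 2 : ℂ) • ((deriv f x)⁻¹ * deriv (deriv f) x) ^ 2

open Filter Set

section MatrixCalculus

variable {𝕜 E n : Type*} [NontriviallyNormedField 𝕜] [NormedAddCommGroup E] [NormedSpace 𝕜 E]
  [Fintype n] {M N : E → Matrix n n 𝕜} {x : E}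

theorem differentiableAt_matrix_iff :
    DifferentiableAt 𝕜 M x ↔ ∀ i j, DifferentiableAt 𝕜 (fun y => M y i j) x :=
  differentiableAt_pi.trans (forall_congr' fun _ => differentiableAt_pi)

theorem DifferentiableAt.matrix_mul (hM : DifferentiableAt 𝕜 M x)
    (hN : DifferentiableAt 𝕜 N x) : DifferentiableAt 𝕜 (fun y => M y * N y) x := by
  refine differentiableAt_matrix_iff.2 fun i j => ?_
  have := differentiableAt_matrix_iff.1 hM
  have := differentiableAt_matrix_iff.1 hN
  simp only [mul_apply]
  fun_prop

variable [DecidableEq n]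

theorem DifferentiableAt.matrix_det (h : DifferentiableAt 𝕜 M x) :
    DifferentiableAt 𝕜 (fun y => (M y).det) x := by
  have := differentiableAt_matrix_iff.1 h
  simp only [det_apply']
  fun_prop

theorem DifferentiableAt.matrix_adjugate (h : DifferentiableAt 𝕜 M x) :
    DifferentiableAt 𝕜 (fun y => (M y).adjugate) x := by
  refine differentiableAt_matrix_iff.2 fun i j => ?_
  simp only [adjugate_apply]
  refine DifferentiableAt.matrix_det (differentiableAt_matrix_iff.2 fun k l => ?_)
  by_cases hk : k = j
  · simp [updateRow_apply, hk]
  · simpa [updateRow_apply, hk] using differentiableAt_matrix_iff.1 h k l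

theorem DifferentiableAt.matrix_inv (h : DifferentiableAt 𝕜 M x) (hM : IsUnit (M x)) :
    DifferentiableAt 𝕜 (fun y => (M y)⁻¹) x := by
  simp only [inv_def, Ring.inverse_eq_inv']
  exact (h.matrix_det.inv ((isUnit_iff_isUnit_det _).1 hM).ne_zero).smul h.matrix_adjugate

end MatrixCalculus

noncomputable def preSchwarzian (φ : ℂ → ℂ) (x : ℂ) : ℂ :=
  deriv (deriv φ) x / deriv φ x

noncomputable def schwarzian (φ : ℂ → ℂ) (x : ℂ) : ℂ :=
  deriv (preSchwarzian φ) x - 1 / 2 * preSchwarzian φ x ^ 2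

noncomputable def matPreSchwarzian {n : Type*} [Fintype n] [DecidableEq n]
    (f : ℂ → Matrix n n ℂ) (x : ℂ) : Matrix n n ℂ :=
  (deriv f x)⁻¹ * deriv (deriv f) x

theorem matS_eq {d : ℕ} (f : ℂ → Matrix (Fin d) (Fin d) ℂ) (x : ℂ) :
    matS f x = deriv (matPreSchwarzian f) x - (1 / 2 : ℂ) • matPreSchwarzian f x ^ 2 :=
  rfl

section ChainRule

variable {n : Type*} [Fintype n] [DecidableEq n] {U s : Set ℂ} {f : ℂ → Matrix n n ℂ}
  {φ : ℂ → ℂ}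

theorem matPreSchwarzian_comp (hs : IsOpen s) (hf : AnalyticOnNhd ℂ f U)
    (hf' : ∀ y ∈ U, IsUnit (deriv f y)) (hφ : AnalyticOnNhd ℂ φ s)
    (hφ' : ∀ y ∈ s, deriv φ y ≠ 0) (hmaps : MapsTo φ s U) {y : ℂ} (hy : y ∈ s) :
    matPreSchwarzian (f ∘ φ) y =
      preSchwarzian φ y • 1 + deriv φ y • matPreSchwarzian f (φ y) := by
  have hderiv : EqOn (deriv (f ∘ φ)) (fun z => deriv φ z • deriv f (φ z)) s := fun z hz =>
    deriv.scomp z (hf _ (hmaps hz)).differentiableAt (hφ z hz).differentiableAt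
  have hderiv2 : deriv (deriv (f ∘ φ)) y = deriv φ y • (deriv φ y • deriv (deriv f) (φ y))
      + deriv (deriv φ) y • deriv f (φ y) :=
    (eventuallyEq_of_mem (hs.mem_nhds hy) hderiv).deriv_eq.trans <| HasDerivAt.deriv <|
      (hφ.deriv y hy).differentiableAt.hasDerivAt.fun_smul <|
        (hf.deriv _ (hmaps hy)).differentiableAt.hasDerivAt.scomp y
          (hφ y hy).differentiableAt.hasDerivAt
  have hunit : IsUnit (deriv f (φ y)).det := (isUnit_iff_isUnit_det _).1 (hf' _ (hmaps hy))
  have hinv : (deriv φ y • deriv f (φ y))⁻¹ = (deriv φ y)⁻¹ • (deriv f (φ y))⁻¹ := by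
    simpa [Units.smul_def] using inv_smul' _ (Units.mk0 _ (hφ' y hy)) hunit
  simp only [matPreSchwarzian, preSchwarzian, hderiv hy, hderiv2, hinv, mul_add,
    smul_mul_assoc, mul_smul_comm, smul_smul, nonsing_inv_mul _ hunit]
  match_scalars <;> field_simp [hφ' y hy]

theorem matS_comp {d : ℕ} {f : ℂ → Matrix (Fin d) (Fin d) ℂ} (hs : IsOpen s)
    (hf : AnalyticOnNhd ℂ f U) (hf' : ∀ y ∈ U, IsUnit (deriv f y)) (hφ : AnalyticOnNhd ℂ φ s)
    (hφ' : ∀ y ∈ s, deriv φ y ≠ 0) (hmaps : MapsTo φ s U) {x : ℂ} (hx : x ∈ s) :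
    matS (f ∘ φ) x = schwarzian φ x • 1 + deriv φ x ^ 2 • matS f (φ x) := by
  have hP : DifferentiableAt ℂ (matPreSchwarzian f) (φ x) :=
    ((hf.deriv _ (hmaps hx)).differentiableAt.matrix_inv (hf' _ (hmaps hx))).matrix_mul
      (hf.deriv.deriv _ (hmaps hx)).differentiableAt
  have hp : DifferentiableAt ℂ (preSchwarzian φ) x :=
    (hφ.deriv.deriv x hx).differentiableAt.div (hφ.deriv x hx).differentiableAt (hφ' x hx)
  have hD : deriv (matPreSchwarzian (f ∘ φ)) x = deriv (preSchwarzian φ) x • 1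
      + (deriv φ x • (deriv φ x • deriv (matPreSchwarzian f) (φ x))
        + deriv (deriv φ) x • matPreSchwarzian f (φ x)) := by
    refine (eventuallyEq_of_mem (hs.mem_nhds hx)
      fun y hy => matPreSchwarzian_comp hs hf hf' hφ hφ' hmaps hy).deriv_eq.trans ?_
    exact ((hp.hasDerivAt.smul_const 1).fun_add
      ((hφ.deriv x hx).differentiableAt.hasDerivAt.fun_smul
        (hP.hasDerivAt.scomp x (hφ x hx).differentiableAt.hasDerivAt))).deriv
  have hφ2 : deriv (deriv φ) x = preSchwarzian φ x * deriv φ x := by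
    rw [preSchwarzian, div_mul_cancel₀ _ (hφ' x hx)]
  rw [matS_eq, matS_eq, hD, matPreSchwarzian_comp hs hf hf' hφ hφ' hmaps hx, hφ2, schwarzian]
  simp only [pow_two, mul_add, add_mul, mul_smul_comm, smul_mul_assoc, mul_one, one_mul]
  match_scalars <;> ring

end ChainRule

section Moebius

variable {α β γ δ x : ℂ}

theorem hasDerivAt_const_div_linear_pow (c : ℂ) (k : ℕ) (hx : γ * x + δ ≠ 0) :
    HasDerivAt (fun y => c / (γ * y + δ) ^ k) (-(k * γ * c) / (γ * x + δ) ^ (k + 1)) x := by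
  have hlin : HasDerivAt (fun y => γ * y + δ) γ x := by
    simpa using ((hasDerivAt_id x).const_mul γ).add_const δ
  rcases k with _ | k
  · simpa using hasDerivAt_const x c
  refine ((hasDerivAt_const x c).fun_div (hlin.fun_pow _) (pow_ne_zero _ hx)).congr_deriv ?_
  field_simp
  push_cast
  ring

theorem hasDerivAt_moebius (hx : γ * x + δ ≠ 0) :
    HasDerivAt (fun y => (α * y + β) / (γ * y + δ)) ((α * δ - β * γ) / (γ * x + δ) ^ 2) x := by
  have hlin : ∀ a b : ℂ, HasDerivAt (fun y => a * y + b) a x := fun a b => by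
    simpa using ((hasDerivAt_id x).const_mul a).add_const b
  refine ((hlin α β).div (hlin γ δ) hx).congr_deriv ?_
  ring

theorem analyticAt_moebius (hx : γ * x + δ ≠ 0) :
    AnalyticAt ℂ (fun y => (α * y + β) / (γ * y + δ)) x := by
  fun_prop (disch := exact hx)

theorem schwarzian_moebius (hdet : α * δ - β * γ ≠ 0) (hx : γ * x + δ ≠ 0) :
    schwarzian (fun y => (α * y + β) / (γ * y + δ)) x = 0 := by
  set D := α * δ - β * γ
  set W : Set ℂ := {y | γ * y + δ ≠ 0}
  have hW : IsOpen W := isOpen_ne_fun (by fun_prop) (by fun_prop)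
  have h1 : EqOn (deriv fun y => (α * y + β) / (γ * y + δ)) (fun y => D / (γ * y + δ) ^ 2) W :=
    fun y hy => (hasDerivAt_moebius hy).deriv
  have h2 : EqOn (deriv (deriv fun y => (α * y + β) / (γ * y + δ)))
      (fun y => -2 * γ * D / (γ * y + δ) ^ 3) W := fun y hy => by
    rw [h1.deriv hW hy, (hasDerivAt_const_div_linear_pow D 2 hy).deriv]
    norm_num
  have hpre : EqOn (preSchwarzian fun y => (α * y + β) / (γ * y + δ))
      (fun y => -2 * γ / (γ * y + δ) ^ 1) W := fun y hy => by
    simp only [preSchwarzian, h1 hy, h2 hy]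
    field_simp [hdet, show γ * y + δ ≠ 0 from hy]
  rw [schwarzian, hpre.deriv hW hx, (hasDerivAt_const_div_linear_pow _ 1 hx).deriv, hpre hx]
  field_simp
  ring

end Moebius

theorem matS_moebius_change_of_variable_general {d : ℕ} (U V : Set ℂ)
    (hV : IsOpen V)
    (f : ℂ → Matrix (Fin d) (Fin d) ℂ) (hf : AnalyticOnNhd ℂ f U)
    (hf' : ∀ x ∈ U, IsUnit (deriv f x))
    (α β γ δ : ℂ) (hdet : α * δ - β * γ ≠ 0)
    (φ : ℂ → ℂ) (hφ : ∀ x, φ x = (α * x + β) / (γ * x + δ))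
    (hden : ∀ x ∈ V, γ * x + δ ≠ 0)
    (hmaps : ∀ x ∈ V, φ x ∈ U) :
    ∀ x ∈ V, matS (f ∘ φ) x = (deriv φ x) ^ 2 • matS f (φ x) := by
  obtain rfl : φ = fun y => (α * y + β) / (γ * y + δ) := funext hφ
  have hφV : AnalyticOnNhd ℂ (fun y => (α * y + β) / (γ * y + δ)) V :=
    fun y hy => analyticAt_moebius (hden y hy)
  have hφ'V : ∀ y ∈ V, deriv (fun y => (α * y + β) / (γ * y + δ)) y ≠ 0 := fun y hy => by
    rw [(hasDerivAt_moebius (hden y hy)).deriv]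
    exact div_ne_zero hdet (pow_ne_zero _ (hden y hy))
  intro x hx
  rw [matS_comp hV hf hf' hφV hφ'V hmaps hx, schwarzian_moebius hdet (hden x hx), zero_smul,
    zero_add]

/-- Invariance of the matrix Schwartz derivative under Möbius change of variable,
as a quadratic differential: `S(f∘φ) = (φ')² ⬝ (S(f)∘φ)`. -/
theorem matS_moebius_change_of_variable {d : ℕ} (U V : Set ℂ)
    (hU : IsOpen U) (hV : IsOpen V)
    (f : ℂ → Matrix (Fin d) (Fin d) ℂ) (hf : AnalyticOnNhd ℂ f U)
    (hf' : ∀ x ∈ U, IsUnit (deriv f x))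
    (α β γ δ : ℂ) (hdet : α * δ - β * γ ≠ 0)
    (φ : ℂ → ℂ) (hφ : ∀ x, φ x = (α * x + β) / (γ * x + δ))
    (hden : ∀ x ∈ V, γ * x + δ ≠ 0)
    (hmaps : ∀ x ∈ V, φ x ∈ U) :
    ∀ x ∈ V, matS (f ∘ φ) x = (deriv φ x) ^ 2 • matS f (φ x) :=
  matS_moebius_change_of_variable_general U V hV f hf hf' α β γ δ hdet φ hφ hden hmaps
end

section
/- Let (A B; C D) be an invertible 2d×2d complex matrix written in d×d blocks, let U ⊆ ℂ be open and suppose x·C+D is invertible for all x ∈ U. Define the matrix Möbius function f(x) := (x·A+B)·(x·C+D)⁻¹ on U. Then f'(x) = (A − f(x)·C)·(x·C+D)⁻¹ is invertible for all x ∈ U, and the matrix-valued Schwartz derivative of f vanishes identically on U: S(f)(x) = 0 for all x ∈ U. -/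
/-!
With `P(x) = C(xC+D)⁻¹` one has `P' = -P²`, and the derivative `f' = (A - fC)(xC+D)⁻¹`
satisfies `f'' = -2 f' P`. Hence `(f')⁻¹f'' = -2P`, and `S(f) = 2P² - ½(2P)² = 0`.
Invertibility of `f'` is a Schur complement computation: the column operation
`(A B; C D) ↦ (A, xA+B; C, xC+D)` preserves the determinant, and expanding around the
invertible block `xC+D` gives `det (A B; C D) = det (xC+D) · det (A - f(x)C)`.
-/

open Matrix

attribute [local instance] Matrix.normedAddCommGroup Matrix.normedSpace

open Filter Topology

section Calculus

variable {𝕜 : Type*} [NontriviallyNormedField 𝕜] {l m n : Type*} {x : 𝕜}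

theorem hasDerivAt_matrix_iff [Fintype m] [Fintype n] {F : 𝕜 → Matrix m n 𝕜}
    {F' : Matrix m n 𝕜} :
    HasDerivAt F F' x ↔ ∀ i j, HasDerivAt (fun t => F t i j) (F' i j) x :=
  hasDerivAt_pi.trans (forall_congr' fun _ => hasDerivAt_pi)

theorem HasDerivAt.matrix_mul [Fintype l] [Fintype m] [Fintype n] {F : 𝕜 → Matrix l m 𝕜}
    {G : 𝕜 → Matrix m n 𝕜} {F' : Matrix l m 𝕜} {G' : Matrix m n 𝕜} (hF : HasDerivAt F F' x)
    (hG : HasDerivAt G G' x) : HasDerivAt (fun t => F t * G t) (F' * G x + F x * G') x := by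
  rw [hasDerivAt_matrix_iff] at hF hG ⊢
  intro i j
  simp only [Matrix.mul_apply, Matrix.add_apply, ← Finset.sum_add_distrib]
  exact HasDerivAt.fun_sum fun k _ => (hF i k).mul (hG k j)

theorem HasDerivAt.matrix_inv [Fintype n] [DecidableEq n] {F : 𝕜 → Matrix n n 𝕜}
    {F' : Matrix n n 𝕜} (hF : HasDerivAt F F' x) (hx : IsUnit (F x)) :
    HasDerivAt (fun t => (F t)⁻¹) (-((F x)⁻¹ * F' * (F x)⁻¹)) x := by
  have hdet : IsUnit (F x).det := (Matrix.isUnit_iff_isUnit_det _).mp hx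
  have hinv_cont : ContinuousAt (fun t => (F t)⁻¹) x :=
    (continuousAt_matrix_inv _ (by
      simpa [Ring.inverse_eq_inv'] using continuousAt_inv₀ hdet.ne_zero)).comp
      hF.continuousAt
  have hunit : ∀ᶠ t in 𝓝 x, IsUnit (F t) := by
    have := (continuous_id.matrix_det.continuousAt.comp hF.continuousAt).eventually_ne
      hdet.ne_zero
    filter_upwards [this] with t ht
    exact (Matrix.isUnit_iff_isUnit_det _).mpr (isUnit_iff_ne_zero.mpr ht)
  replace hF := hasDerivAt_iff_tendsto_slope.mp hF
  refine hasDerivAt_iff_tendsto_slope.mpr ?_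
  have hslope : slope (fun t => (F t)⁻¹) x =ᶠ[𝓝[≠] x]
      fun t => -((F t)⁻¹ * slope F x t * (F x)⁻¹) := by
    filter_upwards [nhdsWithin_le_nhds hunit] with t ht
    simp only [slope_def_module, Matrix.inv_sub_inv (iff_of_true ht hx), Matrix.mul_smul,
      Matrix.smul_mul, ← smul_neg]
    congr 1
    noncomm_ring
  refine Tendsto.congr' hslope.symm ?_
  exact (((hinv_cont.tendsto.mono_left nhdsWithin_le_nhds).mul hF).mul tendsto_const_nhds).neg

theorem hasDerivAt_smul_add {E : Type*} [NormedAddCommGroup E] [NormedSpace 𝕜 E] (C D : E)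
    (x : 𝕜) : HasDerivAt (fun t => t • C + D) C x := by
  simpa using ((hasDerivAt_id x).smul_const C).add_const D

end Calculus

theorem Matrix.isUnit_sub_mul_inv_mul_of_isUnit_fromBlocks {R n : Type*} [CommRing R] [Fintype n]
    [DecidableEq n] {A B C D : Matrix n n R} (hblk : IsUnit (fromBlocks A B C D)) (x : R)
    (hx : IsUnit (x • C + D)) : IsUnit (A - (x • A + B) * (x • C + D)⁻¹ * C) := by
  have hcol : fromBlocks A B C D * fromBlocks 1 (x • 1) 0 1 =
      fromBlocks A (x • A + B) C (x • C + D) := by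
    simp [fromBlocks_multiply, add_comm]
  have hdet : IsUnit (fromBlocks A (x • A + B) C (x • C + D)).det := by
    rw [← hcol, det_mul, det_fromBlocks_zero₂₁]
    simpa using (Matrix.isUnit_iff_isUnit_det _).mp hblk
  have := hx.invertible
  rw [det_fromBlocks₂₂, invOf_eq_nonsing_inv] at hdet
  exact (Matrix.isUnit_iff_isUnit_det _).mpr (isUnit_of_mul_isUnit_right hdet)

section Moebius

variable {𝕜 : Type*} [NontriviallyNormedField 𝕜] {n : Type*} [Fintype n] [DecidableEq n]
  (A B C D : Matrix n n 𝕜) {x : 𝕜}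

noncomputable def moebius (x : 𝕜) : Matrix n n 𝕜 := (x • A + B) * (x • C + D)⁻¹

noncomputable def moebiusDeriv (x : 𝕜) : Matrix n n 𝕜 :=
  (A - moebius A B C D x * C) * (x • C + D)⁻¹

theorem hasDerivAt_inv_smul_add (hx : IsUnit (x • C + D)) :
    HasDerivAt (fun t => (t • C + D)⁻¹) (-((x • C + D)⁻¹ * C * (x • C + D)⁻¹)) x :=
  (hasDerivAt_smul_add C D x).matrix_inv hx

theorem hasDerivAt_mul_inv_smul_add (hx : IsUnit (x • C + D)) :
    HasDerivAt (fun t => C * (t • C + D)⁻¹) (-(C * (x • C + D)⁻¹) ^ 2) x :=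
  ((hasDerivAt_const x C).matrix_mul (hasDerivAt_inv_smul_add C D hx)).congr_deriv <| by
    simp [sq, Matrix.mul_assoc]

theorem hasDerivAt_moebius_s2 (hx : IsUnit (x • C + D)) :
    HasDerivAt (moebius A B C D) (moebiusDeriv A B C D x) x :=
  ((hasDerivAt_smul_add A B x).matrix_mul (hasDerivAt_inv_smul_add C D hx)).congr_deriv <| by
    simp only [moebiusDeriv, moebius]
    noncomm_ring

theorem hasDerivAt_moebiusDeriv (hx : IsUnit (x • C + D)) :
    HasDerivAt (moebiusDeriv A B C D)
      (-(2 : 𝕜) • (moebiusDeriv A B C D x * (C * (x • C + D)⁻¹))) x :=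
  ((hasDerivAt_const x A).sub ((hasDerivAt_moebius_s2 A B C D hx).matrix_mul
    (hasDerivAt_const x C))).matrix_mul (hasDerivAt_inv_smul_add C D hx) |>.congr_deriv <| by
    simp only [moebiusDeriv, Pi.sub_apply, neg_smul, two_smul]
    noncomm_ring

theorem isUnit_moebiusDeriv {A B C D : Matrix n n 𝕜} (hblk : IsUnit (fromBlocks A B C D))
    (hx : IsUnit (x • C + D)) : IsUnit (moebiusDeriv A B C D x) :=
  (isUnit_sub_mul_inv_mul_of_isUnit_fromBlocks hblk x hx).mul (isUnit_nonsing_inv_iff.mpr hx)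

end Moebius

theorem matS_eq_zero_of_deriv_deriv_eq {d : ℕ} {f P : ℂ → Matrix (Fin d) (Fin d) ℂ} {x : ℂ}
    (hunit : ∀ᶠ t in 𝓝 x, IsUnit (deriv f t))
    (hf₂ : ∀ᶠ t in 𝓝 x, deriv (deriv f) t = -(2 : ℂ) • (deriv f t * P t))
    (hP : HasDerivAt P (-P x ^ 2) x) : matS f x = 0 := by
  have hlog : (fun t => (deriv f t)⁻¹ * deriv (deriv f) t) =ᶠ[𝓝 x]
      fun t => -(2 : ℂ) • P t := by
    filter_upwards [hunit, hf₂] with t ht ht₂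
    rw [ht₂, mul_smul_comm, ← Matrix.mul_assoc,
      nonsing_inv_mul _ ((isUnit_iff_isUnit_det _).mp ht), Matrix.one_mul]
  have hlog_deriv :
      deriv (fun t => (deriv f t)⁻¹ * deriv (deriv f) t) x = (2 : ℂ) • P x ^ 2 :=
    hlog.deriv_eq.trans ((hP.const_smul (-2 : ℂ)).deriv.trans (by module))
  have hlog_x : (deriv f x)⁻¹ * deriv (deriv f) x = -(2 : ℂ) • P x := hlog.eq_of_nhds
  rw [matS, hlog_deriv, hlog_x, smul_pow]
  module

/-- The matrix Schwartz derivative of a matrix Möbius function vanishes, and its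
derivative is `(A - f(x)C)(xC+D)⁻¹`, which is invertible. -/
theorem matS_vanishes_on_matrix_moebius {d : ℕ} (U : Set ℂ) (hU : IsOpen U)
    (A B C D : Matrix (Fin d) (Fin d) ℂ)
    (hblk : IsUnit (Matrix.fromBlocks A B C D))
    (hden : ∀ x ∈ U, IsUnit (x • C + D))
    (f : ℂ → Matrix (Fin d) (Fin d) ℂ)
    (hf : ∀ x, f x = (x • A + B) * (x • C + D)⁻¹) :
    ∀ x ∈ U, deriv f x = (A - f x * C) * (x • C + D)⁻¹ ∧
      IsUnit (deriv f x) ∧ matS f x = 0 := by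
  intro x hx
  obtain rfl : f = moebius A B C D := funext hf
  have hderiv : ∀ t ∈ U, deriv (moebius A B C D) t = moebiusDeriv A B C D t :=
    fun t ht => (hasDerivAt_moebius_s2 A B C D (hden t ht)).deriv
  have hunit : ∀ t ∈ U, IsUnit (deriv (moebius A B C D) t) :=
    fun t ht => hderiv t ht ▸ isUnit_moebiusDeriv hblk (hden t ht)
  have hderiv₂ : ∀ t ∈ U, deriv (deriv (moebius A B C D)) t =
      -(2 : ℂ) • (deriv (moebius A B C D) t * (C * (t • C + D)⁻¹)) := fun t ht => by
    have hnear : deriv (moebius A B C D) =ᶠ[𝓝 t] moebiusDeriv A B C D :=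
      eventually_of_mem (hU.mem_nhds ht) hderiv
    calc deriv (deriv (moebius A B C D)) t = deriv (moebiusDeriv A B C D) t := hnear.deriv_eq
      _ = -(2 : ℂ) • (moebiusDeriv A B C D t * (C * (t • C + D)⁻¹)) :=
        (hasDerivAt_moebiusDeriv A B C D (hden t ht)).deriv
      _ = _ := by rw [hderiv t ht]
  exact ⟨hderiv x hx, hunit x hx, matS_eq_zero_of_deriv_deriv_eq
    (eventually_of_mem (hU.mem_nhds hx) hunit) (eventually_of_mem (hU.mem_nhds hx) hderiv₂)
    (hasDerivAt_mul_inv_smul_add C D (hden x hx))⟩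
end
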